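/- Let L1, L2 be objects of Cal⁰_Sym. Then L1⊛L2 is again an object of Cal⁰_Sym: it is a complete atomistic coatomistic lattice satisfying axiom A₀ and its dual. -/

import Mathlib

open Set

def PreservesJoins {α β : Type*} [CompleteLattice α] [CompleteLattice β] (f : α → β) : Prop :=
  ∀ s : Set α, f (sSup s) = sSup (f '' s)

def rAdj {α β : Type*} [CompleteLattice α] [CompleteLattice β] (f : α → β) : β → α :=
  fun b => sSup {a | f a ≤ b}

def atomsBelow {α : Type*} [CompleteLattice α] (a : α) : Set α := {p | IsAtom p ∧ p ≤ a}

def coatomsAbove {α : Type*} [CompleteLattice α] (a : α) : Set α := {x | IsCoatom x ∧ a ≤ x}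

/-- A morphism of `Cal⁰_Sym`: preserves arbitrary joins, sends atoms to atoms or `⊥`,
and its right adjoint sends coatoms to coatoms or `⊤`. -/
def IsMor {α β : Type*} [CompleteLattice α] [CompleteLattice β] (f : α → β) : Prop :=
  PreservesJoins f ∧ (∀ p : α, IsAtom p → IsAtom (f p) ∨ f p = ⊥) ∧
    (∀ x : β, IsCoatom x → IsCoatom (rAdj f x) ∨ rAdj f x = ⊤)

/-- Axiom A₀ : for any two coatoms `x`, `y`, the atoms below `x` together with the
atoms below `y` do not exhaust all atoms. -/
def AxiomA0 (α : Type*) [CompleteLattice α] : Prop :=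
  ∀ x y : α, IsCoatom x → IsCoatom y →
    atomsBelow x ∪ atomsBelow y ≠ {p : α | IsAtom p}

/-- The dual of axiom A₀ (A₀ in `Lᵒᵖ`). -/
def AxiomA0Dual (α : Type*) [CompleteLattice α] : Prop :=
  ∀ p q : α, IsAtom p → IsAtom q →
    coatomsAbove p ∪ coatomsAbove q ≠ {x : α | IsCoatom x}

/-- Conditions for a complete lattice to be an object of `Cal⁰_Sym`. -/
def CalCond (α : Type*) [CompleteLattice α] : Prop :=
  IsAtomistic α ∧ IsCoatomistic α ∧ AxiomA0 α ∧ AxiomA0Dual α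

def atomPairs (α β : Type*) [CompleteLattice α] [CompleteLattice β] : Set (α × β) :=
  {p | IsAtom p.1 ∧ IsAtom p.2}

def sec1 {α β : Type*} (R : Set (α × β)) (p₂ : β) : Set α := {q₁ | (q₁, p₂) ∈ R}

def sec2 {α β : Type*} (R : Set (α × β)) (p₁ : α) : Set β := {q₂ | (p₁, q₂) ∈ R}

/-- A section belongs to `Cl(Σ' ∪ {1})`: it is the set of atoms below a coatom,
or the set of all atoms. -/
def goodSec {α : Type*} [CompleteLattice α] (S : Set α) : Prop :=
  (∃ x : α, IsCoatom x ∧ S = atomsBelow x) ∨ S = {p : α | IsAtom p}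

/-- The set `Σ'_⊛` of the definition of `L1 ⊛ L2`. -/
def starCoatoms (α β : Type*) [CompleteLattice α] [CompleteLattice β] :
    Set (Set (α × β)) :=
  {R | R ⊂ atomPairs α β ∧ (∀ p₂ : β, IsAtom p₂ → goodSec (sec1 R p₂)) ∧
      (∀ p₁ : α, IsAtom p₁ → goodSec (sec2 R p₁))}

/-- The tensor product `L1 ⊛ L2`, as a closure system on `Σ₁ × Σ₂`
(`⋂₀ ∅` is normalized to the ground set `Σ₁ × Σ₂`). -/
def tensorCS (α β : Type*) [CompleteLattice α] [CompleteLattice β] :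
    Set (Set (α × β)) :=
  {S | ∃ ω ⊆ starCoatoms α β, S = atomPairs α β ∩ ⋂₀ ω}

/-- `a₁ □ a₂ = (Σ[a₁] × Σ₂) ∪ (Σ₁ × Σ[a₂])`. -/
def box {α β : Type*} [CompleteLattice α] [CompleteLattice β] (a₁ : α) (a₂ : β) :
    Set (α × β) :=
  {p ∈ atomPairs α β | p.1 ≤ a₁ ∨ p.2 ≤ a₂}

/-- `a₁ ∘ a₂ = Σ[a₁] × Σ[a₂]`. -/
def circ {α β : Type*} [CompleteLattice α] [CompleteLattice β] (a₁ : α) (a₂ : β) :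
    Set (α × β) :=
  {p ∈ atomPairs α β | p.1 ≤ a₁ ∧ p.2 ≤ a₂}

/-- Closure of a subset in a closure system. -/
def clF {X : Type*} (C : Set (Set X)) (T : Set X) : Set X := ⋂₀ {S ∈ C | T ⊆ S}

/-- Atoms of a closure system ordered by inclusion. -/
def IsAtomF {X : Type*} (C : Set (Set X)) (R : Set X) : Prop :=
  R ∈ C ∧ R ≠ ∅ ∧ ∀ S ∈ C, S ⊂ R → S = ∅

/-- Coatoms of a closure system with ground set `G`, ordered by inclusion. -/
def IsCoatomF {X : Type*} (C : Set (Set X)) (G : Set X) (R : Set X) : Prop :=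
  R ∈ C ∧ R ≠ G ∧ ∀ S ∈ C, R ⊂ S → S = G


section Helpers

variable {α β : Type*} [CompleteLattice α] [CompleteLattice β]

lemma box_subset (x₁ : α) (x₂ : β) : box x₁ x₂ ⊆ atomPairs α β := fun _ hp => hp.1

lemma tensor_subset {S : Set (α × β)} (hS : S ∈ tensorCS α β) : S ⊆ atomPairs α β := by
  obtain ⟨ω, -, rfl⟩ := hS; exact inter_subset_left

lemma star_subset {R : Set (α × β)} (hR : R ∈ starCoatoms α β) : R ⊆ atomPairs α β :=
  hR.1.subset

lemma star_mem_tensor {R : Set (α × β)} (hR : R ∈ starCoatoms α β) : R ∈ tensorCS α β := by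
  refine ⟨{R}, by simpa using hR, ?_⟩
  rw [sInter_singleton, inter_eq_self_of_subset_right (star_subset hR)]

lemma box_mem_star {x₁ : α} {x₂ : β} (hx₁ : IsCoatom x₁) (hx₂ : IsCoatom x₂)
    (hne : ∃ c ∈ atomPairs α β, c ∉ box x₁ x₂) : box x₁ x₂ ∈ starCoatoms α β := by
  obtain ⟨c, hc, hcb⟩ := hne
  refine ⟨(ssubset_iff_of_subset (box_subset x₁ x₂)).2 ⟨c, hc, hcb⟩, ?_, ?_⟩
  · intro p₂ hp₂
    by_cases h : p₂ ≤ x₂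
    · right
      ext q₁
      simp only [sec1, box, atomPairs, atomsBelow, mem_setOf_eq]
      exact ⟨fun hq => hq.1.1, fun hq => ⟨⟨hq, hp₂⟩, Or.inr h⟩⟩
    · left
      refine ⟨x₁, hx₁, ?_⟩
      ext q₁
      simp only [sec1, box, atomPairs, atomsBelow, mem_setOf_eq]
      constructor
      · rintro ⟨⟨h1, -⟩, h3 | h3⟩
        · exact ⟨h1, h3⟩
        · exact absurd h3 h
      · rintro ⟨h1, h2⟩; exact ⟨⟨h1, hp₂⟩, Or.inl h2⟩
  · intro p₁ hp₁
    by_cases h : p₁ ≤ x₁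
    · right
      ext q₂
      simp only [sec2, box, atomPairs, atomsBelow, mem_setOf_eq]
      exact ⟨fun hq => hq.1.2, fun hq => ⟨⟨hp₁, hq⟩, Or.inl h⟩⟩
    · left
      refine ⟨x₂, hx₂, ?_⟩
      ext q₂
      simp only [sec2, box, atomPairs, atomsBelow, mem_setOf_eq]
      constructor
      · rintro ⟨⟨-, h1⟩, h3 | h3⟩
        · exact absurd h3 h
        · exact ⟨h1, h3⟩
      · rintro ⟨h1, h2⟩; exact ⟨⟨hp₁, h1⟩, Or.inr h2⟩

lemma exists_coatom_not_le (h : IsCoatomistic α) {p : α} (hp : IsAtom p) :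
    ∃ x : α, IsCoatom x ∧ ¬ p ≤ x := by
  by_contra hc
  push_neg at hc
  obtain ⟨s, hs, hcoat⟩ : ∃ s : Set α, ⊥ = sInf s ∧ ∀ a ∈ s, IsCoatom a := by
    obtain ⟨s, hs, hc⟩ := h.isGLB_coatoms ⊥; exact ⟨s, hs.sInf_eq.symm, hc⟩
  have hpb : p ≤ ⊥ := hs ▸ le_sInf fun x hx => hc x (hcoat x hx)
  exact hp.1 (le_bot_iff.1 hpb)

lemma exists_coatom_sep (h : IsCoatomistic α) {p q : α} (hp : IsAtom p) (hq : IsAtom q)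
    (hpq : q ≠ p) : ∃ x : α, IsCoatom x ∧ p ≤ x ∧ ¬ q ≤ x := by
  obtain ⟨s, hs, hcoat⟩ : ∃ s : Set α, p = sInf s ∧ ∀ a ∈ s, IsCoatom a := by
    obtain ⟨s, hs, hc⟩ := h.isGLB_coatoms p; exact ⟨s, hs.sInf_eq.symm, hc⟩
  by_contra hc
  push_neg at hc
  have hqp : q ≤ p := by
    rw [hs]
    refine le_sInf fun x hx => hc x (hcoat x hx) ?_
    rw [hs]; exact sInf_le hx
  rcases (IsAtom.le_iff hp).1 hqp with h' | h'
  · exact hq.1 h'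
  · exact hpq h'

lemma coatom_eq_of_atomsBelow_subset (h : IsAtomistic α) {x y : α} (hx : IsCoatom x)
    (hy : IsCoatom y) (hs : atomsBelow x ⊆ atomsBelow y) : x = y := by
  obtain ⟨s, hsx, hat⟩ : ∃ s : Set α, x = sSup s ∧ ∀ a ∈ s, IsAtom a := by
    obtain ⟨s, hs, hc⟩ := h.isLUB_atoms x; exact ⟨s, hs.sSup_eq.symm, hc⟩
  have hxy : x ≤ y := by
    rw [hsx]
    exact sSup_le fun a ha => (hs ⟨hat a ha, hsx ▸ le_sSup ha⟩).2
  rcases eq_or_lt_of_le hxy with h' | h'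
  · exact h'
  · exact absurd (hx.2 y h') hy.1

lemma box_maximal (hA : IsAtomistic α) (hB : IsAtomistic β)
    {x₁ : α} {x₂ : β} (hx₁ : IsCoatom x₁) (hx₂ : IsCoatom x₂) {R : Set (α × β)}
    (hR : R ∈ starCoatoms α β) (hsub : box x₁ x₂ ⊆ R) {c : α × β} (hc : c ∈ R)
    (hc₁ : ¬ c.1 ≤ x₁) (hc₂ : ¬ c.2 ≤ x₂) : False := by
  have hcP : c ∈ atomPairs α β := star_subset hR hc
  have hA2 : sec2 R c.1 = {p : β | IsAtom p} := by
    rcases hR.2.2 c.1 hcP.1 with ⟨y, hy, hsec⟩ | hsec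
    · exfalso
      have hsub2 : atomsBelow x₂ ⊆ atomsBelow y := by
        intro q₂ hq₂
        rw [← hsec]
        exact hsub ⟨⟨hcP.1, hq₂.1⟩, Or.inr hq₂.2⟩
      have hxy : x₂ = y := coatom_eq_of_atomsBelow_subset hB hx₂ hy hsub2
      have hcm : c.2 ∈ sec2 R c.1 := hc
      rw [hsec, ← hxy] at hcm
      exact hc₂ hcm.2
    · exact hsec
  have hB1 : ∀ q₂ : β, IsAtom q₂ → sec1 R q₂ = {p : α | IsAtom p} := by
    intro q₂ hq₂
    rcases hR.2.1 q₂ hq₂ with ⟨y, hy, hsec⟩ | hsec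
    · exfalso
      have hsub1 : atomsBelow x₁ ⊆ atomsBelow y := by
        intro q₁ hq₁
        rw [← hsec]
        exact hsub ⟨⟨hq₁.1, hq₂⟩, Or.inl hq₁.2⟩
      have hxy : x₁ = y := coatom_eq_of_atomsBelow_subset hA hx₁ hy hsub1
      have hcm : c.1 ∈ sec1 R q₂ := by
        have : q₂ ∈ sec2 R c.1 := by rw [hA2]; exact hq₂
        exact this
      rw [hsec, ← hxy] at hcm
      exact hc₁ hcm.2
    · exact hsec
  have hall : atomPairs α β ⊆ R := by
    intro q hq
    have hm : q.1 ∈ sec1 R q.2 := by rw [hB1 q.2 hq.2]; exact hq.1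
    exact hm
  exact hR.1.ne (Subset.antisymm hR.1.subset hall)

lemma star_union_ne (hA0α : AxiomA0 α) (hA0β : AxiomA0 β)
    {R S : Set (α × β)} (hR : R ∈ starCoatoms α β) (hS : S ∈ starCoatoms α β) :
    R ∪ S ≠ atomPairs α β := by
  intro hu
  obtain ⟨a, haP, haR⟩ := exists_of_ssubset hR.1
  obtain ⟨b, hbP, hbS⟩ := exists_of_ssubset hS.1
  obtain ⟨x, hx, hsecx⟩ : ∃ x : α, IsCoatom x ∧ sec1 R a.2 = atomsBelow x := by
    rcases hR.2.1 a.2 haP.2 with h | h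
    · exact h
    · exact absurd (show a.1 ∈ sec1 R a.2 by rw [h]; exact haP.1) haR
  obtain ⟨x', hx', hsecx'⟩ : ∃ x' : α, IsCoatom x' ∧ sec1 S b.2 = atomsBelow x' := by
    rcases hS.2.1 b.2 hbP.2 with h | h
    · exact h
    · exact absurd (show b.1 ∈ sec1 S b.2 by rw [h]; exact hbP.1) hbS
  have hall : {p : α | IsAtom p} ⊆ atomsBelow x ∪ atomsBelow x' := by
    intro p₁ hp₁
    have hcase : sec2 R p₁ = {p : β | IsAtom p} ∨ sec2 S p₁ = {p : β | IsAtom p} := by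
      rcases hR.2.2 p₁ hp₁ with ⟨y, hy, hs1⟩ | h1
      · rcases hS.2.2 p₁ hp₁ with ⟨y', hy', hs2⟩ | h2
        · exfalso
          apply hA0β y y' hy hy'
          apply Subset.antisymm (union_subset (fun q hq => hq.1) (fun q hq => hq.1))
          intro q₂ hq₂
          have hm : (p₁, q₂) ∈ R ∪ S := by
            rw [hu]; exact ⟨hp₁, hq₂⟩
          rcases hm with h | h
          · exact Or.inl (hs1 ▸ (h : q₂ ∈ sec2 R p₁))
          · exact Or.inr (hs2 ▸ (h : q₂ ∈ sec2 S p₁))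
        · exact Or.inr h2
      · exact Or.inl h1
    rcases hcase with h | h
    · left
      have hm : p₁ ∈ sec1 R a.2 := by
        have : a.2 ∈ sec2 R p₁ := by rw [h]; exact haP.2
        exact this
      rw [hsecx] at hm; exact hm
    · right
      have hm : p₁ ∈ sec1 S b.2 := by
        have : b.2 ∈ sec2 S p₁ := by rw [h]; exact hbP.2
        exact this
      rw [hsecx'] at hm; exact hm
  exact hA0α x x' hx hx'
    (Subset.antisymm (union_subset (fun q hq => hq.1) (fun q hq => hq.1)) hall)

lemma coatomF_mem_star {R : Set (α × β)}
    (h : IsCoatomF (tensorCS α β) (atomPairs α β) R) : R ∈ starCoatoms α β := by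
  obtain ⟨⟨ω, hω, rfl⟩, hne, hmax⟩ := h
  by_cases hemp : ω = ∅
  · subst hemp
    exact absurd (by simp) hne
  · obtain ⟨R', hR'⟩ := nonempty_iff_ne_empty.2 hemp
    have hRsub : atomPairs α β ∩ ⋂₀ ω ⊆ R' := fun q hq => mem_sInter.1 hq.2 R' hR'
    by_cases heq : atomPairs α β ∩ ⋂₀ ω = R'
    · rw [heq]; exact hω hR'
    · have h' := hmax R' (star_mem_tensor (hω hR')) (hRsub.ssubset_of_ne heq)
      exact absurd h' (hω hR').1.ne

end Helpers

/-- `L1 ⊛ L2` is again an object of `Cal⁰_Sym`: a complete (closed under arbitrary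
intersections) atomistic (its atoms are the singletons, and every member is the closure
of its points) coatomistic (every member is the intersection of the members of `Σ'_⊛`
containing it) lattice satisfying axiom `A₀` and its dual. -/
theorem tensorCS_mem_CalSym {α β : Type*} [CompleteLattice α] [CompleteLattice β]
    (hα : CalCond α) (hβ : CalCond β) :
    (∅ ∈ tensorCS α β) ∧ (atomPairs α β ∈ tensorCS α β) ∧
    (∀ W ⊆ tensorCS α β, W.Nonempty → ⋂₀ W ∈ tensorCS α β) ∧
    (∀ p ∈ atomPairs α β, IsAtomF (tensorCS α β) ({p} : Set (α × β))) ∧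
    (∀ S ∈ tensorCS α β, S = clF (tensorCS α β) S) ∧
    (∀ S ∈ tensorCS α β,
      S = atomPairs α β ∩ ⋂₀ {R ∈ starCoatoms α β | S ⊆ R}) ∧
    (∀ R S : Set (α × β), IsCoatomF (tensorCS α β) (atomPairs α β) R →
      IsCoatomF (tensorCS α β) (atomPairs α β) S → R ∪ S ≠ atomPairs α β) ∧
    (∀ p ∈ atomPairs α β, ∀ q ∈ atomPairs α β,
      ∃ R : Set (α × β), IsCoatomF (tensorCS α β) (atomPairs α β) R ∧
        p ∉ R ∧ q ∉ R) := by
  obtain ⟨hαA, hαC, hα0, hα0d⟩ := hα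
  obtain ⟨hβA, hβC, hβ0, hβ0d⟩ := hβ
  refine ⟨?_, ?_, ?_, ?_, ?_, ?_, ?_, ?_⟩
  · -- ∅ ∈ tensorCS
    refine ⟨starCoatoms α β, Subset.rfl, Eq.symm ?_⟩
    rw [eq_empty_iff_forall_notMem]
    rintro c ⟨hc, hint⟩
    obtain ⟨x₁, hx₁, h1⟩ := exists_coatom_not_le hαC hc.1
    obtain ⟨x₂, hx₂, h2⟩ := exists_coatom_not_le hβC hc.2
    have hbox : box x₁ x₂ ∈ starCoatoms α β :=
      box_mem_star hx₁ hx₂ ⟨c, hc, fun hb => hb.2.elim h1 h2⟩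
    exact (mem_sInter.1 hint _ hbox).2.elim h1 h2
  · -- atomPairs ∈ tensorCS
    exact ⟨∅, empty_subset _, by simp⟩
  · -- closed under nonempty intersections
    rintro W hW ⟨S₀, hS₀⟩
    refine ⟨{R ∈ starCoatoms α β | ∃ S ∈ W, S ⊆ R}, sep_subset _ _, ?_⟩
    apply Subset.antisymm
    · intro c hc
      refine ⟨tensor_subset (hW hS₀) (mem_sInter.1 hc S₀ hS₀), mem_sInter.2 ?_⟩
      rintro R ⟨-, S, hSW, hSR⟩
      exact hSR (mem_sInter.1 hc S hSW)
    · rintro c ⟨hcP, hint⟩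
      refine mem_sInter.2 fun S hSW => ?_
      obtain ⟨ω, hω, rfl⟩ := hW hSW
      refine ⟨hcP, mem_sInter.2 fun R hRω => ?_⟩
      exact mem_sInter.1 hint R
        ⟨hω hRω, atomPairs α β ∩ ⋂₀ ω, hSW, fun q hq => mem_sInter.1 hq.2 R hRω⟩
  · -- atoms are singletons
    intro p hp
    refine ⟨?_, singleton_ne_empty p, fun S _ hS => ?_⟩
    · refine ⟨{R ∈ starCoatoms α β | p ∈ R}, sep_subset _ _, ?_⟩
      apply Subset.antisymm
      · intro c hc
        rw [mem_singleton_iff] at hc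
        subst hc
        exact ⟨hp, mem_sInter.2 fun R hR => hR.2⟩
      · rintro c ⟨hcP, hint⟩
        rw [mem_singleton_iff]
        by_contra hne
        have hd : c.1 ≠ p.1 ∨ c.2 ≠ p.2 := by
          by_contra h
          push_neg at h
          exact hne (Prod.ext h.1 h.2)
        rcases hd with h | h
        · obtain ⟨x₁, hx₁, hpx, hcx⟩ := exists_coatom_sep hαC hp.1 hcP.1 h
          obtain ⟨x₂, hx₂, hcx2⟩ := exists_coatom_not_le hβC hcP.2
          have hbox := box_mem_star hx₁ hx₂ ⟨c, hcP, fun hb => hb.2.elim hcx hcx2⟩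
          have hm : c ∈ box x₁ x₂ :=
            mem_sInter.1 hint _ ⟨hbox, ⟨hp, Or.inl hpx⟩⟩
          exact hm.2.elim hcx hcx2
        · obtain ⟨x₂, hx₂, hpx, hcx⟩ := exists_coatom_sep hβC hp.2 hcP.2 h
          obtain ⟨x₁, hx₁, hcx1⟩ := exists_coatom_not_le hαC hcP.1
          have hbox := box_mem_star hx₁ hx₂ ⟨c, hcP, fun hb => hb.2.elim hcx1 hcx⟩
          have hm : c ∈ box x₁ x₂ :=
            mem_sInter.1 hint _ ⟨hbox, ⟨hp, Or.inr hpx⟩⟩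
          exact hm.2.elim hcx1 hcx
    · rcases subset_singleton_iff_eq.1 hS.subset with h | h
      · exact h
      · exact absurd h hS.ne
  · -- S = clF S
    intro S hS
    apply Subset.antisymm
    · exact fun c hc => mem_sInter.2 fun T hT => hT.2 hc
    · exact fun c hc => mem_sInter.1 hc S ⟨hS, Subset.rfl⟩
  · -- coatomistic
    intro S hS
    obtain ⟨ω, hω, rfl⟩ := hS
    apply Subset.antisymm
    · exact fun c hc => ⟨hc.1, mem_sInter.2 fun R hR => hR.2 hc⟩
    · rintro c ⟨hcP, hint⟩
      refine ⟨hcP, mem_sInter.2 fun R hRω => ?_⟩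
      exact mem_sInter.1 hint R ⟨hω hRω, fun q hq => mem_sInter.1 hq.2 R hRω⟩
  · -- axiom A₀
    intro R S hR hS
    exact star_union_ne hα0 hβ0 (coatomF_mem_star hR) (coatomF_mem_star hS)
  · -- dual of axiom A₀
    intro p hp q hq
    have hex1 : ∃ x₁ : α, IsCoatom x₁ ∧ ¬ p.1 ≤ x₁ ∧ ¬ q.1 ≤ x₁ := by
      by_contra hc
      push_neg at hc
      apply hα0d p.1 q.1 hp.1 hq.1
      apply Subset.antisymm (union_subset (fun x hx => hx.1) (fun x hx => hx.1))
      intro x hx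
      by_cases hh : p.1 ≤ x
      · exact Or.inl ⟨hx, hh⟩
      · exact Or.inr ⟨hx, hc x hx hh⟩
    have hex2 : ∃ x₂ : β, IsCoatom x₂ ∧ ¬ p.2 ≤ x₂ ∧ ¬ q.2 ≤ x₂ := by
      by_contra hc
      push_neg at hc
      apply hβ0d p.2 q.2 hp.2 hq.2
      apply Subset.antisymm (union_subset (fun x hx => hx.1) (fun x hx => hx.1))
      intro x hx
      by_cases hh : p.2 ≤ x
      · exact Or.inl ⟨hx, hh⟩
      · exact Or.inr ⟨hx, hc x hx hh⟩
    obtain ⟨x₁, hx₁, hp₁, hq₁⟩ := hex1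
    obtain ⟨x₂, hx₂, hp₂, hq₂⟩ := hex2
    have hboxstar : box x₁ x₂ ∈ starCoatoms α β :=
      box_mem_star hx₁ hx₂ ⟨p, hp, fun hb => hb.2.elim hp₁ hp₂⟩
    refine ⟨box x₁ x₂, ⟨star_mem_tensor hboxstar, ?_, ?_⟩,
      fun hb => hb.2.elim hp₁ hp₂, fun hb => hb.2.elim hq₁ hq₂⟩
    · intro heq
      have : p ∈ box x₁ x₂ := by rw [heq]; exact hp
      exact this.2.elim hp₁ hp₂
    · intro T hT hbT
      by_contra hTne
      obtain ⟨ω, hω, rfl⟩ := hT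
      obtain ⟨c, hcT, hcb⟩ := exists_of_ssubset hbT
      have hcP : c ∈ atomPairs α β := hcT.1
      have hc₁ : ¬ c.1 ≤ x₁ := fun hh => hcb ⟨hcP, Or.inl hh⟩
      have hc₂ : ¬ c.2 ≤ x₂ := fun hh => hcb ⟨hcP, Or.inr hh⟩
      by_cases hemp : ω = ∅
      · subst hemp
        exact hTne (by simp)
      · obtain ⟨R', hR'⟩ := nonempty_iff_ne_empty.2 hemp
        have hsub : box x₁ x₂ ⊆ R' :=
          fun z hz => mem_sInter.1 (hbT.subset hz).2 R' hR'
        exact box_maximal hαA hβA hx₁ hx₂ (hω hR') hsub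
          (mem_sInter.1 hcT.2 R' hR') hc₁ hc₂
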